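/- arXiv:2208.00580 — 5 statements merged into one kernel-verified Lean document; each statement's English description precedes it below -/
import Mathlib

section
/- Let z₁, z₂, z₁', z₂' ∈ D and u₁, u₂, u₁ʰ, u₂ʰ ∈ ℝ satisfy uᵢʰ = uᵢ + log((1-|zᵢ|²)/(1-|zᵢ'|²)) for i = 1,2. Then |z₁' - z₂'| = e^{(u₁+u₂)/2}|z₁ - z₂| if and only if sinh(d_h(z₁',z₂')/2) = e^{(u₁ʰ+u₂ʰ)/2} sinh(d_h(z₁,z₂)/2). -/
/-- The hyperbolic (Poincaré) distance on the open unit disk `D = {z : ℂ | |z| < 1}`. -/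
noncomputable def hypDist (z₁ z₂ : ℂ) : ℝ :=
  Real.log ((‖1 - (starRingEnd ℂ) z₁ * z₂‖ + ‖z₁ - z₂‖) /
            (‖1 - (starRingEnd ℂ) z₁ * z₂‖ - ‖z₁ - z₂‖))

/-!
Both sides are rescalings of the same quantity. With `pᵢ = 1 - |zᵢ|²` one has
`sinh (d_h(z₁, z₂) / 2) = |z₁ - z₂| / √(p₁ p₂)`, because `|1 - z̄₁z₂|² - |z₁ - z₂|² = p₁ p₂`.
The relation between `uᵢʰ` and `uᵢ` says exactly that `e^{uᵢʰ/2} / √pᵢ = e^{uᵢ/2} / √(1 - |zᵢ'|²)`,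
so after dividing both sides of the Euclidean relation by `√((1 - |z₁'|²)(1 - |z₂'|²))`
it becomes the hyperbolic one.
-/

open Real ComplexConjugate

theorem Complex.norm_one_sub_conj_mul_sq_sub_norm_sub_sq (z w : ℂ) :
    ‖1 - conj z * w‖ ^ 2 - ‖z - w‖ ^ 2 = (1 - ‖z‖ ^ 2) * (1 - ‖w‖ ^ 2) := by
  simp only [Complex.sq_norm, Complex.normSq_apply, Complex.sub_re, Complex.sub_im,
    Complex.mul_re, Complex.mul_im, Complex.one_re, Complex.one_im,
    Complex.conj_re, Complex.conj_im]
  ring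

theorem one_sub_norm_sq_pos {z : ℂ} (hz : ‖z‖ < 1) : 0 < 1 - ‖z‖ ^ 2 :=
  sub_pos.2 (pow_lt_one₀ (norm_nonneg z) hz two_ne_zero)

theorem Real.exp_half_log {x : ℝ} (hx : 0 < x) : exp (log x / 2) = √x := by
  rw [exp_half, exp_log hx]

theorem Real.sinh_half_log_add_div_sub {a b : ℝ} (hab : -a < b) (hba : b < a) :
    sinh (log ((a + b) / (a - b)) / 2) = b / √(a ^ 2 - b ^ 2) := by
  have hplus : 0 < a + b := by linarith
  have hminus : 0 < a - b := by linarith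
  have hfactor : √(a ^ 2 - b ^ 2) = √(a + b) * √(a - b) := by
    rw [← sqrt_mul hplus.le]
    ring_nf
  rw [sinh_eq, exp_half_log (div_pos hplus hminus), exp_neg, exp_half_log (div_pos hplus hminus),
    sqrt_div hplus.le, hfactor]
  field_simp
  rw [sq_sqrt hplus.le, sq_sqrt hminus.le]
  ring

theorem sinh_half_hypDist {z w : ℂ} (hz : ‖z‖ < 1) (hw : ‖w‖ < 1) :
    sinh (hypDist z w / 2) = ‖z - w‖ / √((1 - ‖z‖ ^ 2) * (1 - ‖w‖ ^ 2)) := by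
  have hprod : 0 < (1 - ‖z‖ ^ 2) * (1 - ‖w‖ ^ 2) :=
    mul_pos (one_sub_norm_sq_pos hz) (one_sub_norm_sq_pos hw)
  have hid := Complex.norm_one_sub_conj_mul_sq_sub_norm_sub_sq z w
  have hlt : ‖z - w‖ < ‖1 - conj z * w‖ := by
    nlinarith [norm_nonneg (z - w), norm_nonneg (1 - conj z * w)]
  rw [hypDist, sinh_half_log_add_div_sub (by linarith [norm_nonneg (z - w)]) hlt, hid]

theorem exp_half_add_div_sqrt_mul (a b : ℝ) {p₁ : ℝ} (hp₁ : 0 ≤ p₁) (p₂ : ℝ) :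
    exp ((a + b) / 2) / √(p₁ * p₂) = exp (a / 2) / √p₁ * (exp (b / 2) / √p₂) := by
  rw [add_div, exp_add, sqrt_mul hp₁, mul_div_mul_comm]

theorem exp_half_add_log_div_div_sqrt (u : ℝ) {p q : ℝ} (hp : 0 < p) (hq : 0 < q) :
    exp ((u + log (p / q)) / 2) / √p = exp (u / 2) / √q := by
  rw [add_div, exp_add, exp_half_log (div_pos hp hq), sqrt_div hp.le]
  field_simp

theorem euclidean_iff_hyperbolic_discrete_conformal
    (z₁ z₂ z₁' z₂' : ℂ)
    (h₁ : ‖z₁‖ < 1) (h₂ : ‖z₂‖ < 1)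
    (h₁' : ‖z₁'‖ < 1) (h₂' : ‖z₂'‖ < 1)
    (u₁ u₂ u₁h u₂h : ℝ)
    (hu₁ : u₁h = u₁ + Real.log ((1 - ‖z₁‖ ^ 2) / (1 - ‖z₁'‖ ^ 2)))
    (hu₂ : u₂h = u₂ + Real.log ((1 - ‖z₂‖ ^ 2) / (1 - ‖z₂'‖ ^ 2))) :
    ‖z₁' - z₂'‖ = Real.exp ((u₁ + u₂) / 2) * ‖z₁ - z₂‖ ↔
      Real.sinh (hypDist z₁' z₂' / 2) =
        Real.exp ((u₁h + u₂h) / 2) * Real.sinh (hypDist z₁ z₂ / 2) := by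
  have hfactor : exp ((u₁h + u₂h) / 2) / √((1 - ‖z₁‖ ^ 2) * (1 - ‖z₂‖ ^ 2)) =
      exp ((u₁ + u₂) / 2) / √((1 - ‖z₁'‖ ^ 2) * (1 - ‖z₂'‖ ^ 2)) := by
    rw [exp_half_add_div_sqrt_mul _ _ (one_sub_norm_sq_pos h₁).le,
      exp_half_add_div_sqrt_mul _ _ (one_sub_norm_sq_pos h₁').le, hu₁, hu₂,
      exp_half_add_log_div_div_sqrt _ (one_sub_norm_sq_pos h₁) (one_sub_norm_sq_pos h₁'),
      exp_half_add_log_div_div_sqrt _ (one_sub_norm_sq_pos h₂) (one_sub_norm_sq_pos h₂')]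
  have hsqrt : √((1 - ‖z₁'‖ ^ 2) * (1 - ‖z₂'‖ ^ 2)) ≠ 0 :=
    (sqrt_pos.2 (mul_pos (one_sub_norm_sq_pos h₁') (one_sub_norm_sq_pos h₂'))).ne'
  rw [sinh_half_hypDist h₁' h₂', sinh_half_hypDist h₁ h₂, ← mul_div_assoc,
    ← div_mul_eq_mul_div, hfactor, div_mul_eq_mul_div, div_left_inj' hsqrt]
end

section
/- Let G = (V,E) be a locally finite graph, V₀ ⊆ V finite, η : E → ℝ_{>0}, and g : ∂V₀ → ℝ. Then there exists a unique f : V₀ → ℝ with f = g on ∂V₀ and f harmonic (with weights η) at every vertex of int(V₀). -/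
/-!
At an interior vertex where a subharmonic function is maximal among its neighbours, the
Laplacian is a sum of nonpositive terms, so every neighbour shares the maximal value. Since `G` is
connected and `V₀ ≠ V`, a maximum over `V₀` can therefore not be attained in the interior only:
it is attained on `∂V₀` (maximum principle). Applied to `±(f - f')` for two solutions `f, f'`,
this gives uniqueness. For existence, the map sending `u : V₀ → ℝ` to its boundary values and its
interior Laplacian is an endomorphism of the finite-dimensional space `V₀ → ℝ`; it is injective by
uniqueness, hence surjective.
-/

namespace SimpleGraph

variable {V : Type*} (G : SimpleGraph V) [G.LocallyFinite]

noncomputable def weightedLaplacian (η : V → V → ℝ) : (V → ℝ) →ₗ[ℝ] (V → ℝ) where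
  toFun f i := ∑ j ∈ G.neighborFinset i, η i j * (f j - f i)
  map_add' f f' := by
    ext i
    simp only [Pi.add_apply, ← Finset.sum_add_distrib]
    exact Finset.sum_congr rfl fun j _ => by ring
  map_smul' c f := by
    ext i
    simp only [Pi.smul_apply, smul_eq_mul, RingHom.id_apply, Finset.mul_sum]
    exact Finset.sum_congr rfl fun j _ => by ring

def IsDirichletSolution (V₀ : Finset V) (η : V → V → ℝ) (g f : V → ℝ) : Prop :=
  (∀ i, i ∉ V₀ → f i = 0) ∧
  (∀ i ∈ V₀, (∃ j, j ∉ V₀ ∧ G.Adj i j) → f i = g i) ∧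
  (∀ i ∈ V₀, (∀ j, G.Adj i j → j ∈ V₀) → G.weightedLaplacian η f i = 0)

open Classical in
noncomputable def dirichletOperator (V₀ : Finset V) (η : V → V → ℝ) :
    (V₀ → ℝ) →ₗ[ℝ] (V₀ → ℝ) :=
  LinearMap.pi fun i =>
    (if ∃ j, j ∉ V₀ ∧ G.Adj i j then LinearMap.proj (i : V)
      else LinearMap.proj (i : V) ∘ₗ G.weightedLaplacian η) ∘ₗ
    Function.ExtendByZero.linearMap ℝ Subtype.val

variable {G}

theorem eq_of_adj_of_weightedLaplacian_nonneg {η : V → V → ℝ}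
    (hη : ∀ i j, G.Adj i j → 0 < η i j) {f : V → ℝ} {i : V}
    (hΔ : 0 ≤ G.weightedLaplacian η f i) (hmax : ∀ j, G.Adj i j → f j ≤ f i)
    {j : V} (hij : G.Adj i j) : f j = f i := by
  have hterm : ∀ k ∈ G.neighborFinset i, η i k * (f k - f i) ≤ 0 := fun k hk =>
    have hik : G.Adj i k := (G.mem_neighborFinset i k).1 hk
    mul_nonpos_of_nonneg_of_nonpos (hη i k hik).le (sub_nonpos.2 (hmax k hik))
  have hsum : ∑ k ∈ G.neighborFinset i, η i k * (f k - f i) = 0 :=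
    le_antisymm (Finset.sum_nonpos hterm) hΔ
  have hj := (Finset.sum_eq_zero_iff_of_nonpos hterm).1 hsum j ((G.mem_neighborFinset i j).2 hij)
  exact sub_eq_zero.1 ((mul_eq_zero.1 hj).resolve_left (hη i j hij).ne')

theorem le_zero_of_weightedLaplacian_nonneg (hconn : G.Connected) {V₀ : Finset V}
    (hcompl : ∃ j, j ∉ V₀) {η : V → V → ℝ} (hη : ∀ i j, G.Adj i j → 0 < η i j) {h : V → ℝ}
    (hbd : ∀ i ∈ V₀, (∃ j, j ∉ V₀ ∧ G.Adj i j) → h i ≤ 0)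
    (hint : ∀ i ∈ V₀, (∀ j, G.Adj i j → j ∈ V₀) → 0 ≤ G.weightedLaplacian η h i) :
    ∀ i ∈ V₀, h i ≤ 0 := by
  by_contra! hpos
  obtain ⟨i, hi, hhi⟩ := hpos
  obtain ⟨i₀, hi₀, hmax⟩ := V₀.exists_max_image h ⟨i, hi⟩
  let S : Set V := {u | u ∈ V₀ ∧ h u = h i₀}
  have hclosed : ∀ u v, G.Adj u v → u ∈ S → v ∈ S := by
    rintro u v huv ⟨hu, hu₀⟩
    have hu_int : ∀ j, G.Adj u j → j ∈ V₀ := fun j hj => by_contra fun hj' =>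
      (hbd u hu ⟨j, hj', hj⟩).not_gt (hu₀ ▸ hhi.trans_le (hmax i hi))
    have hu_max : ∀ j, G.Adj u j → h j ≤ h u := fun j hj => hu₀ ▸ hmax j (hu_int j hj)
    exact ⟨hu_int v huv,
      (eq_of_adj_of_weightedLaplacian_nonneg hη (hint u hu hu_int) hu_max huv).trans hu₀⟩
  obtain ⟨j, hj⟩ := hcompl
  obtain ⟨d, -, hd₁, hd₂⟩ :=
    (hconn.preconnected i₀ j).some.exists_boundary_dart S ⟨hi₀, rfl⟩ fun hjS => hj hjS.1
  exact hd₂ (hclosed _ _ d.adj hd₁)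

open Classical in
theorem isDirichletSolution_extend_of_dirichletOperator_eq {V₀ : Finset V} {η : V → V → ℝ}
    {g : V → ℝ} {u : V₀ → ℝ}
    (hu : G.dirichletOperator V₀ η u =
      fun i : V₀ => if ∃ j, j ∉ V₀ ∧ G.Adj i j then g i else 0) :
    G.IsDirichletSolution V₀ η g (Function.extend Subtype.val u 0) := by
  have hu_at : ∀ i (hi : i ∈ V₀), G.dirichletOperator V₀ η u ⟨i, hi⟩ =
      if ∃ j, j ∉ V₀ ∧ G.Adj i j then g i else 0 := fun i hi => congrFun hu ⟨i, hi⟩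
  refine ⟨fun i hi => Function.extend_apply' _ _ _ fun ⟨k, hk⟩ => hi (hk ▸ k.2), ?_, ?_⟩
  · intro i hi hb
    simpa [dirichletOperator, hb] using hu_at i hi
  · intro i hi hint
    have hb : ¬∃ j, j ∉ V₀ ∧ G.Adj i j := fun ⟨j, hj, hij⟩ => hj (hint j hij)
    have hΔ := hu_at i hi
    simp only [dirichletOperator, hb, if_false, LinearMap.pi_apply, LinearMap.comp_apply] at hΔ
    exact hΔ

section DirichletProblem

variable (hconn : G.Connected) {V₀ : Finset V} (hcompl : ∃ j, j ∉ V₀) {η : V → V → ℝ}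
  (hη : ∀ i j, G.Adj i j → 0 < η i j)
include hconn hcompl hη

theorem IsDirichletSolution.le {g f f' : V → ℝ} (hf : G.IsDirichletSolution V₀ η g f)
    (hf' : G.IsDirichletSolution V₀ η g f') : ∀ i ∈ V₀, f i ≤ f' i := by
  have hdiff := le_zero_of_weightedLaplacian_nonneg hconn hcompl hη (h := f - f')
    (fun i hi hb => by rw [Pi.sub_apply, hf.2.1 i hi hb, hf'.2.1 i hi hb, sub_self])
    (fun i hi hint => by rw [map_sub, Pi.sub_apply, hf.2.2 i hi hint, hf'.2.2 i hi hint, sub_self])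
  exact fun i hi => sub_nonpos.1 (hdiff i hi)

theorem IsDirichletSolution.eq {g f f' : V → ℝ} (hf : G.IsDirichletSolution V₀ η g f)
    (hf' : G.IsDirichletSolution V₀ η g f') : f = f' := by
  funext i
  by_cases hi : i ∈ V₀
  · exact le_antisymm (hf.le hconn hcompl hη hf' i hi) (hf'.le hconn hcompl hη hf i hi)
  · rw [hf.1 i hi, hf'.1 i hi]

theorem dirichletOperator_injective : Function.Injective (G.dirichletOperator V₀ η) := by
  refine (injective_iff_map_eq_zero _).2 fun u hu => ?_
  have hsol : G.IsDirichletSolution V₀ η 0 (Function.extend Subtype.val u 0) :=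
    isDirichletSolution_extend_of_dirichletOperator_eq (by rw [hu]; funext i; simp)
  have hzero : G.IsDirichletSolution V₀ η 0 0 := ⟨fun _ _ => rfl, fun _ _ _ => rfl, by simp⟩
  funext i
  simpa [Subtype.val_injective.extend_apply] using congrFun (hsol.eq hconn hcompl hη hzero) i

theorem exists_isDirichletSolution (g : V → ℝ) : ∃ f, G.IsDirichletSolution V₀ η g f := by
  classical
  obtain ⟨u, hu⟩ := LinearMap.injective_iff_surjective.1
    (dirichletOperator_injective hconn hcompl hη)
    fun i : V₀ => if ∃ j, j ∉ V₀ ∧ G.Adj i j then g i else 0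
  exact ⟨_, isDirichletSolution_extend_of_dirichletOperator_eq hu⟩

end DirichletProblem

end SimpleGraph

theorem discrete_dirichlet_problem_general {V : Type*} (G : SimpleGraph V)
    [G.LocallyFinite] (hconn : G.Connected)
    (V₀ : Finset V) (hcompl : ∃ j, j ∉ V₀)
    (η : V → V → ℝ) (hη : ∀ i j, G.Adj i j → 0 < η i j)
    (g : V → ℝ) :
    ∃! f : V → ℝ,
      (∀ i, i ∉ V₀ → f i = 0) ∧
      (∀ i ∈ V₀, (∃ j, j ∉ V₀ ∧ G.Adj i j) → f i = g i) ∧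
      (∀ i ∈ V₀, (∀ j, G.Adj i j → j ∈ V₀) →
        ∑ j ∈ G.neighborFinset i, η i j * (f j - f i) = 0) := by
  obtain ⟨f, hf⟩ := SimpleGraph.exists_isDirichletSolution hconn hcompl hη g
  exact ⟨f, hf, fun f' hf' => SimpleGraph.IsDirichletSolution.eq hconn hcompl hη hf' hf⟩

/-- Existence and uniqueness of the solution of the discrete Dirichlet problem: given boundary
values `g` on `∂V₀`, there is a unique function on `V₀` (extended by `0` outside `V₀`) equal to
`g` on `∂V₀` and harmonic with weights `η` at every interior vertex of `V₀`. -/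
theorem discrete_dirichlet_problem {V : Type*} (G : SimpleGraph V)
    [G.LocallyFinite] (hconn : G.Connected)
    (V₀ : Finset V) (hcompl : ∃ j, j ∉ V₀)
    (hbd : ∃ i ∈ V₀, ∃ j, j ∉ V₀ ∧ G.Adj i j)
    (η : V → V → ℝ) (hη : ∀ i j, G.Adj i j → 0 < η i j)
    (g : V → ℝ) :
    ∃! f : V → ℝ,
      (∀ i, i ∉ V₀ → f i = 0) ∧
      (∀ i ∈ V₀, (∃ j, j ∉ V₀ ∧ G.Adj i j) → f i = g i) ∧
      (∀ i ∈ V₀, (∀ j, G.Adj i j → j ∈ V₀) →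
        ∑ j ∈ G.neighborFinset i, η i j * (f j - f i) = 0) :=
  discrete_dirichlet_problem_general G hconn V₀ hcompl η hη g
end

section
/- Let two Euclidean triangles Δijk share all three vertex labels, with side lengths l and l' related by l'_{ab} = e^{(u_a+u_b)/2} l_{ab} for a vertex function u (a discrete conformal change). If all inner angles of both triangles are at least ε > 0, then e^{(u_j - u_i)/2} ≥ sin²ε; consequently |u_j - u_i| ≤ 4 log(1/sin ε) for every edge ij. -/
/-!
By the law of sines, in a triangle all of whose angles are at least `ε` any side is at least
`sin ε` times any other. Since `e^{(u_j - u_i)/2} = (l'_{jk} / l'_{ik}) · (l_{ik} / l_{jk})` is a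
product of two such ratios, it is at least `sin² ε`; applying this to both orientations of the
edge `ij` and taking logarithms bounds `|u_j - u_i|`.
-/

open EuclideanGeometry Real Function

theorem Real.sin_le_sin_of_le_of_le_pi_sub {ε x : ℝ} (hε : 0 ≤ ε) (hεx : ε ≤ x)
    (hxε : x ≤ π - ε) : sin ε ≤ sin x := by
  rcases le_total x (π / 2) with hx | hx
  · exact sin_le_sin_of_le_of_le_pi_div_two (by linarith) hx hεx
  · rw [← sin_pi_sub x]
    exact sin_le_sin_of_le_of_le_pi_div_two (by linarith) (by linarith) (by linarith)

theorem Real.abs_le_four_mul_log_one_div_of_sq_le_exp {s x : ℝ} (hs : 0 < s)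
    (h₁ : s ^ 2 ≤ exp (x / 2)) (h₂ : s ^ 2 ≤ exp (-x / 2)) : |x| ≤ 4 * log (1 / s) := by
  have hlog : ∀ y, s ^ 2 ≤ exp y → 2 * log s ≤ y := fun y h => by
    simpa [log_pow] using log_le_log (by positivity) h
  have e₁ := hlog _ h₁
  have e₂ := hlog _ h₂
  rw [one_div, log_inv, abs_le]
  constructor <;> linarith

namespace EuclideanGeometry

variable {V Pt : Type*} [NormedAddCommGroup V] [InnerProductSpace ℝ V] [MetricSpace Pt]
  [NormedAddTorsor V Pt]

theorem sin_mul_dist_le_dist_of_le_angle {ε : ℝ} {p₁ p₂ p₃ : Pt} (h : p₂ ≠ p₁) (hε : 0 ≤ ε)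
    (h₁ : ε ≤ ∠ p₃ p₁ p₂) (h₂ : ε ≤ ∠ p₁ p₂ p₃) : sin ε * dist p₂ p₃ ≤ dist p₁ p₃ := by
  have hsum := angle_add_angle_add_angle_eq_pi p₃ h
  have hsin : sin ε ≤ sin (∠ p₁ p₂ p₃) :=
    sin_le_sin_of_le_of_le_pi_sub hε h₂ (by linarith [angle_nonneg p₂ p₃ p₁])
  calc sin ε * dist p₂ p₃ ≤ sin (∠ p₁ p₂ p₃) * dist p₂ p₃ := by gcongr
    _ = sin (∠ p₃ p₁ p₂) * dist p₁ p₃ := by rw [law_sin, dist_comm]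
    _ ≤ dist p₁ p₃ := mul_le_of_le_one_left dist_nonneg (sin_le_one _)

def TriangleAnglesGE (ε : ℝ) (p : Fin 3 → Pt) : Prop :=
  ∀ a b c : Fin 3, a ≠ b → b ≠ c → a ≠ c → ε ≤ ∠ (p b) (p a) (p c)

namespace TriangleAnglesGE

variable {ε : ℝ} {p : Fin 3 → Pt}

theorem le_pi_div_three (h : TriangleAnglesGE ε p) (hp : Injective p) : ε ≤ π / 3 := by
  have hsum := angle_add_angle_add_angle_eq_pi (p 2) (hp.ne (by decide : (1 : Fin 3) ≠ 0))
  linarith [h 1 0 2 (by decide) (by decide) (by decide),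
    h 2 1 0 (by decide) (by decide) (by decide), h 0 2 1 (by decide) (by decide) (by decide)]

theorem sin_pos (h : TriangleAnglesGE ε p) (hp : Injective p) (hε : 0 < ε) : 0 < sin ε :=
  Real.sin_pos_of_pos_of_lt_pi hε (by linarith [h.le_pi_div_three hp, pi_pos])

theorem sin_mul_dist_le_dist (h : TriangleAnglesGE ε p) (hp : Injective p) (hε : 0 ≤ ε)
    {a b c : Fin 3} (hab : a ≠ b) (hbc : b ≠ c) (hac : a ≠ c) :
    sin ε * dist (p b) (p c) ≤ dist (p a) (p c) :=
  sin_mul_dist_le_dist_of_le_angle (hp.ne hab.symm) hε (h a c b hac hbc.symm hab)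
    (h b a c hab.symm hac hbc)

end TriangleAnglesGE

end EuclideanGeometry

theorem exp_half_sub_mul_eq {ι : Type*} {l l' : ι → ι → ℝ} {u : ι → ℝ}
    (h : ∀ a b, l' a b = exp ((u a + u b) / 2) * l a b) (a b c : ι) :
    exp ((u b - u a) / 2) * (l' a c * l b c) = l' b c * l a c := by
  rw [h a c, h b c, show (u b + u c) / 2 = (u b - u a) / 2 + (u a + u c) / 2 by ring, exp_add]
  ring

theorem sq_sin_le_exp_half_sub_of_triangleAnglesGE {V Pt : Type*} [NormedAddCommGroup V]
    [InnerProductSpace ℝ V] [MetricSpace Pt] [NormedAddTorsor V Pt] {P P' : Fin 3 → Pt}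
    {u : Fin 3 → ℝ} {ε : ℝ} (hε : 0 < ε) (hP : Injective P) (hP' : Injective P')
    (hconf : ∀ a b, dist (P' a) (P' b) = exp ((u a + u b) / 2) * dist (P a) (P b))
    (hang : TriangleAnglesGE ε P) (hang' : TriangleAnglesGE ε P') (a b : Fin 3) :
    sin ε ^ 2 ≤ exp ((u b - u a) / 2) := by
  rcases eq_or_ne a b with rfl | hab
  · simpa using sin_sq_le_one ε
  obtain ⟨c, hac, hbc⟩ : ∃ c, a ≠ c ∧ b ≠ c := by revert a b; decide
  have hl := hang.sin_mul_dist_le_dist hP hε.le hab hbc hac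
  have hl' := hang'.sin_mul_dist_le_dist hP' hε.le hab.symm hac hbc
  have hsin := hang.sin_pos hP hε
  have hpos : 0 < dist (P' a) (P' c) * dist (P b) (P c) :=
    mul_pos (dist_pos.2 (hP'.ne hac)) (dist_pos.2 (hP.ne hbc))
  refine le_of_mul_le_mul_right ?_ hpos
  calc sin ε ^ 2 * (dist (P' a) (P' c) * dist (P b) (P c))
      = (sin ε * dist (P' a) (P' c)) * (sin ε * dist (P b) (P c)) := by ring
    _ ≤ dist (P' b) (P' c) * dist (P a) (P c) :=
        mul_le_mul hl' hl (mul_nonneg hsin.le dist_nonneg) dist_nonneg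
    _ = _ := (exp_half_sub_mul_eq hconf a b c).symm

/-- For a discrete conformal change between two nondegenerate Euclidean triangles all of whose
angles are at least `ε > 0`, the conformal factors satisfy
`e^{(u_b - u_a)/2} ≥ sin² ε`, and consequently `|u_b - u_a| ≤ 4 log(1 / sin ε)` for every edge. -/
theorem conformal_factor_bound_on_triangle
    (P P' : Fin 3 → EuclideanSpace ℝ (Fin 2)) (u : Fin 3 → ℝ) (ε : ℝ) (hε : 0 < ε)
    (hnd : AffineIndependent ℝ P) (hnd' : AffineIndependent ℝ P')
    (hconf : ∀ a b : Fin 3, dist (P' a) (P' b) = Real.exp ((u a + u b) / 2) * dist (P a) (P b))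
    (hang : ∀ a b c : Fin 3, a ≠ b → b ≠ c → a ≠ c →
      ε ≤ ∠ (P b) (P a) (P c) ∧ ε ≤ ∠ (P' b) (P' a) (P' c)) :
    ∀ a b : Fin 3, Real.sin ε ^ 2 ≤ Real.exp ((u b - u a) / 2) ∧
      |u b - u a| ≤ 4 * Real.log (1 / Real.sin ε) := by
  have hP : TriangleAnglesGE ε P := fun a b c hab hbc hac => (hang a b c hab hbc hac).1
  have hP' : TriangleAnglesGE ε P' := fun a b c hab hbc hac => (hang a b c hab hbc hac).2
  have key :=
    sq_sin_le_exp_half_sub_of_triangleAnglesGE hε hnd.injective hnd'.injective hconf hP hP'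
  intro a b
  refine ⟨key a b, abs_le_four_mul_log_one_div_of_sq_le_exp (hP.sin_pos hnd.injective hε)
    (key a b) ?_⟩
  rw [neg_sub]
  exact key b a
end

section
/- Duffin reciprocity: for a finite electrical network separating two disjoint nonempty vertex sets V₁, V₂ (with V \ (V₁∪V₂) finite), and resistances μ : E₀ → ℝ_{>0}, the discrete extremal length EL(V₁,V₂,μ) and discrete extremal width EW(V₁,V₂,μ) satisfy EL · EW = 1. -/
open Finset

variable {V : Type*} [Fintype V] [DecidableEq V]

/-- The edges of the network relevant for the extremal length problem between `V₁` and `V₂`: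
edges having at least one endpoint outside `V₁ ∪ V₂`. -/
noncomputable def groundEdges (G : SimpleGraph V) (V₁ V₂ : Finset V) : Finset (Sym2 V) :=
  letI := Classical.dec
  Finset.univ.filter (fun e => e ∈ G.edgeSet ∧ ∃ v ∈ e, v ∉ V₁ ∧ v ∉ V₂)

/-- The paths between `V₁` and `V₂`: edge sets of simple (combinatorial) paths joining a vertex
of `V₁` to a vertex of `V₂`, all of whose edges lie in the ground edge set. -/
def pathSets (G : SimpleGraph V) (V₁ V₂ : Finset V) : Set (Finset (Sym2 V)) :=
  {p | ↑p ⊆ (groundEdges G V₁ V₂ : Set (Sym2 V)) ∧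
    ∃ a ∈ V₁, ∃ b ∈ V₂, ∃ w : G.Walk a b, w.IsPath ∧ w.edges.toFinset = p}

/-- The cuts between `V₁` and `V₂`: sets of ground edges meeting every path. -/
def cutSets (G : SimpleGraph V) (V₁ V₂ : Finset V) : Set (Finset (Sym2 V)) :=
  {q | ↑q ⊆ (groundEdges G V₁ V₂ : Set (Sym2 V)) ∧
    ∀ p ∈ pathSets G V₁ V₂, (p ∩ q).Nonempty}

/-- The discrete extremal length between `V₁` and `V₂` with resistances `μ`. -/
noncomputable def discreteEL (G : SimpleGraph V) (V₁ V₂ : Finset V) (μ : Sym2 V → ℝ) : ℝ :=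
  sInf {x : ℝ | ∃ w : Sym2 V → ℝ,
    (∀ q ∈ cutSets G V₁ V₂, 1 ≤ ∑ e ∈ q, w e) ∧
    x = ∑ e ∈ groundEdges G V₁ V₂, μ e * w e ^ 2}

/-- The discrete extremal width between `V₁` and `V₂` with resistances `μ`. -/
noncomputable def discreteEW (G : SimpleGraph V) (V₁ V₂ : Finset V) (μ : Sym2 V → ℝ) : ℝ :=
  sInf {x : ℝ | ∃ w : Sym2 V → ℝ,
    (∀ p ∈ pathSets G V₁ V₂, 1 ≤ ∑ e ∈ p, μ e * w e) ∧
    x = ∑ e ∈ groundEdges G V₁ V₂, μ e * w e ^ 2}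

/-!
Cut–path duality: if `w` is cut-admissible and `ℓ ≥ 0` is path-admissible then
`∑ₑ wₑ ℓₑ ≥ 1`. Indeed, for every `t ∈ (0, 1]` the edges crossing level `t` of the `ℓ`-distance
from `V₁` (capped at `1`) form a cut, and averaging the cut condition over `t` charges each edge
at most its `ℓ`-length. Applied to `ℓ = μ v` and combined with Cauchy–Schwarz this gives
`EL · EW ≥ 1`.

Conversely, `EL` is attained by some admissible `w`, and the indicator of any path is
cut-admissible. Minimality of `w` against the convex combinations of `w` with that indicator
gives `∑_{e ∈ p} μₑ wₑ ≥ EL` for every path `p`, so `w / EL` is admissible for `EW` and has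
energy `1 / EL`.
-/

open Set Filter Topology MeasureTheory

section Energy

variable {ι : Type*}

def energy (s : Finset ι) (μ w : ι → ℝ) : ℝ := ∑ i ∈ s, μ i * w i ^ 2

def admissible (Q : Set (Finset ι)) : Set (ι → ℝ) := {w | ∀ q ∈ Q, 1 ≤ ∑ i ∈ q, w i}

variable {s : Finset ι} {μ : ι → ℝ} {Q : Set (Finset ι)}

lemma continuous_energy : Continuous (energy s μ) := by
  unfold energy; fun_prop

lemma energy_smul (c : ℝ) (w : ι → ℝ) : energy s μ (c • w) = c ^ 2 * energy s μ w := by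
  simp only [energy, Finset.mul_sum, Pi.smul_apply, smul_eq_mul]
  exact Finset.sum_congr rfl fun _ _ => by ring

lemma energy_add_smul (w d : ι → ℝ) (t : ℝ) :
    energy s μ (w + t • d) =
      energy s μ w + 2 * t * ∑ i ∈ s, μ i * w i * d i + t ^ 2 * energy s μ d := by
  simp only [energy, Finset.mul_sum, ← Finset.sum_add_distrib, Pi.add_apply, Pi.smul_apply,
    smul_eq_mul]
  exact Finset.sum_congr rfl fun _ _ => by ring

lemma energy_abs (w : ι → ℝ) : energy s μ (fun i => |w i|) = energy s μ w := by
  simp only [energy, sq_abs]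

lemma energy_truncate_le (hμ : ∀ i ∈ s, 0 ≤ μ i) (w : ι → ℝ) :
    energy s μ (fun i => min |w i| 1) ≤ energy s μ w := by
  refine Finset.sum_le_sum fun i hi => mul_le_mul_of_nonneg_left ?_ (hμ i hi)
  rw [← sq_abs (w i)]
  exact pow_le_pow_left₀ (le_min (abs_nonneg _) zero_le_one) (min_le_left _ _) 2

lemma sq_sum_mul_mul_le_energy_mul_energy (hμ : ∀ i ∈ s, 0 ≤ μ i) (w v : ι → ℝ) :
    (∑ i ∈ s, μ i * w i * v i) ^ 2 ≤ energy s μ w * energy s μ v :=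
  Finset.sum_sq_le_sum_mul_sum_of_sq_le_mul s
    (fun i hi => mul_nonneg (hμ i hi) (sq_nonneg _))
    (fun i hi => mul_nonneg (hμ i hi) (sq_nonneg _))
    fun i _ => le_of_eq (by ring)

lemma convex_admissible : Convex ℝ (admissible Q) := by
  intro w hw v hv a b ha hb hab q hq
  simp only [Pi.add_apply, Pi.smul_apply, smul_eq_mul, Finset.sum_add_distrib, ← Finset.mul_sum]
  nlinarith [hw q hq, hv q hq]

lemma isClosed_admissible : IsClosed (admissible Q) := by
  simp only [admissible, Set.ofPred_forall]
  exact isClosed_biInter fun q _ => isClosed_le continuous_const (by fun_prop)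

lemma one_mem_admissible (hQ : ∀ q ∈ Q, q.Nonempty) : (1 : ι → ℝ) ∈ admissible Q := fun q hq => by
  simpa using (hQ q hq).card_pos

lemma abs_mem_admissible {w : ι → ℝ} (hw : w ∈ admissible Q) :
    (fun i => |w i|) ∈ admissible Q := fun q hq =>
  (hw q hq).trans (Finset.sum_le_sum fun i _ => le_abs_self (w i))

lemma truncate_mem_admissible {w : ι → ℝ} (hw : w ∈ admissible Q) :
    (fun i => min |w i| 1) ∈ admissible Q := by
  intro q hq
  by_cases hbig : ∃ i ∈ q, 1 ≤ |w i|
  · obtain ⟨i, hi, hwi⟩ := hbig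
    calc (1 : ℝ) = min |w i| 1 := (min_eq_right hwi).symm
      _ ≤ ∑ j ∈ q, min |w j| 1 :=
        Finset.single_le_sum (f := fun j => min |w j| 1)
          (fun j _ => le_min (abs_nonneg _) zero_le_one) hi
  · push Not at hbig
    calc (1 : ℝ) ≤ ∑ j ∈ q, |w j| := abs_mem_admissible hw q hq
      _ = ∑ j ∈ q, min |w j| 1 := Finset.sum_congr rfl fun j hj => (min_eq_left (hbig j hj).le).symm

/-- Truncating to `[0, 1]` keeps admissibility and lowers the energy, so a minimiser can be
sought in the compact cube. -/
lemma exists_isMinOn_energy_admissible [Finite ι] (hμ : ∀ i ∈ s, 0 ≤ μ i)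
    (hQ : ∀ q ∈ Q, q.Nonempty) : ∃ w ∈ admissible Q, IsMinOn (energy s μ) (admissible Q) w := by
  have hK : IsCompact (admissible Q ∩ Icc 0 1) := isCompact_Icc.inter_left isClosed_admissible
  obtain ⟨w, ⟨hw, -⟩, hmin⟩ :=
    hK.exists_isMinOn ⟨1, one_mem_admissible hQ, zero_le_one, le_rfl⟩ continuous_energy.continuousOn
  refine ⟨w, hw, fun u hu => ?_⟩
  have htrunc : (fun i => min |u i| 1) ∈ admissible Q ∩ Icc 0 1 :=
    ⟨truncate_mem_admissible hu, fun _ => le_min (abs_nonneg _) zero_le_one,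
      fun _ => min_le_right _ _⟩
  exact (hmin htrunc).trans (energy_truncate_le hμ u)

lemma nonneg_of_forall_mem_Ioo_nonneg_add_mul {a b : ℝ} (h : ∀ t ∈ Ioo (0 : ℝ) 1, 0 ≤ a + b * t) :
    0 ≤ a := by
  have hlim : Tendsto (fun t => a + b * t) (𝓝[>] 0) (𝓝 a) := by
    have : Continuous fun t : ℝ => a + b * t := by fun_prop
    simpa using (this.tendsto 0).mono_left nhdsWithin_le_nhds
  exact ge_of_tendsto hlim (eventually_of_mem (Ioo_mem_nhdsGT one_pos) h)

lemma sum_mul_mul_sub_nonneg_of_isMinOn {K : Set (ι → ℝ)} {w u : ι → ℝ} (hK : Convex ℝ K)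
    (hw : w ∈ K) (hmin : IsMinOn (energy s μ) K w) (hu : u ∈ K) :
    0 ≤ ∑ i ∈ s, μ i * w i * (u i - w i) := by
  suffices h : 0 ≤ 2 * ∑ i ∈ s, μ i * w i * (u - w) i by simpa using h
  refine nonneg_of_forall_mem_Ioo_nonneg_add_mul (b := energy s μ (u - w)) fun t ht => ?_
  have hle := hmin (hK.add_smul_sub_mem hw hu (Ioo_subset_Icc_self ht))
  rw [Set.mem_ofPred_eq, energy_add_smul] at hle
  have ht0 : 0 < t := ht.1
  nlinarith

end Energy

section Potential

variable {α : Type*}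

def walkLengths (G : SimpleGraph α) (A : Set α) (E : Set (Sym2 α)) (ℓ : Sym2 α → ℝ) (x : α) :
    Set ℝ :=
  {r | ∃ a ∈ A, ∃ W : G.Walk a x, (∀ e ∈ W.edges, e ∈ E) ∧ r = (W.edges.map ℓ).sum}

/-- Inserting `1` keeps the infimum over a nonempty set, also where `x` cannot be reached. -/
noncomputable def cappedDist (G : SimpleGraph α) (A : Set α) (E : Set (Sym2 α))
    (ℓ : Sym2 α → ℝ) (x : α) : ℝ :=
  sInf (insert 1 (walkLengths G A E ℓ x))

variable {G : SimpleGraph α} {A : Set α} {E : Set (Sym2 α)} {ℓ : Sym2 α → ℝ}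

lemma bddBelow_insert_walkLengths (hℓ : ∀ e ∈ E, 0 ≤ ℓ e) (x : α) :
    BddBelow (insert 1 (walkLengths G A E ℓ x)) := by
  refine ⟨0, ?_⟩
  rintro r (rfl | ⟨a, -, W, hWE, rfl⟩)
  · exact zero_le_one
  · exact List.sum_nonneg fun r hr => by
      obtain ⟨e, he, rfl⟩ := List.mem_map.1 hr
      exact hℓ e (hWE e he)

lemma cappedDist_nonpos (hℓ : ∀ e ∈ E, 0 ≤ ℓ e) {a : α} (ha : a ∈ A) :
    cappedDist G A E ℓ a ≤ 0 :=
  csInf_le (bddBelow_insert_walkLengths hℓ a) (Or.inr ⟨a, ha, .nil, by simp, by simp⟩)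

lemma one_le_cappedDist {b : α}
    (hb : ∀ a ∈ A, ∀ W : G.Walk a b, (∀ e ∈ W.edges, e ∈ E) → 1 ≤ (W.edges.map ℓ).sum) :
    1 ≤ cappedDist G A E ℓ b := by
  refine le_csInf (Set.insert_nonempty _ _) ?_
  rintro r (rfl | ⟨a, ha, W, hWE, rfl⟩)
  exacts [le_rfl, hb a ha W hWE]

lemma cappedDist_le_add (hℓ : ∀ e ∈ E, 0 ≤ ℓ e) {x y : α} (hxy : G.Adj x y) (he : s(x, y) ∈ E) :
    cappedDist G A E ℓ y ≤ cappedDist G A E ℓ x + ℓ s(x, y) := by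
  rw [← sub_le_iff_le_add]
  refine le_csInf (Set.insert_nonempty _ _) ?_
  rintro r (rfl | ⟨a, ha, W, hWE, rfl⟩)
  · rw [sub_le_iff_le_add]
    exact (csInf_le (bddBelow_insert_walkLengths hℓ y) (Set.mem_insert _ _)).trans
      (le_add_of_nonneg_right (hℓ _ he))
  · rw [sub_le_iff_le_add]
    refine csInf_le (bddBelow_insert_walkLengths hℓ y) (Or.inr ⟨a, ha, W.concat hxy, ?_, ?_⟩)
    · simp only [SimpleGraph.Walk.edges_concat, List.concat_eq_append, List.mem_append,
        List.mem_singleton]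
      rintro e (he' | rfl)
      exacts [hWE e he', he]
    · simp [SimpleGraph.Walk.edges_concat]

lemma abs_sub_cappedDist_le (hℓ : ∀ e ∈ E, 0 ≤ ℓ e) {x y : α} (hxy : G.Adj x y)
    (he : s(x, y) ∈ E) : |cappedDist G A E ℓ x - cappedDist G A E ℓ y| ≤ ℓ s(x, y) := by
  have hyx := cappedDist_le_add (A := A) hℓ hxy.symm (Sym2.eq_swap ▸ he)
  rw [Sym2.eq_swap] at hyx
  have := cappedDist_le_add (A := A) hℓ hxy he
  exact abs_sub_le_iff.2 ⟨by linarith, by linarith⟩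

end Potential

section Coarea

variable {α : Type*}

def levelCrossing (c : α → ℝ) (e : Sym2 α) : Set ℝ :=
  {t | ∃ x ∈ e, ∃ y ∈ e, c x < t ∧ t ≤ c y}

lemma levelCrossing_mk (c : α → ℝ) (x y : α) : levelCrossing c s(x, y) = uIoc (c x) (c y) := by
  ext t
  simp only [levelCrossing, Sym2.mem_iff, exists_eq_or_imp, exists_eq_left, Set.mem_ofPred_eq,
    Set.mem_uIoc]
  constructor
  · rintro ((h | h) | (h | h))
    all_goals first | (exfalso; linarith) | tauto
  · tauto

lemma measurableSet_levelCrossing (c : α → ℝ) (e : Sym2 α) : MeasurableSet (levelCrossing c e) := by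
  induction e using Sym2.ind with
  | _ x y => rw [levelCrossing_mk]; exact measurableSet_uIoc

lemma exists_mem_edges_of_lt_of_le {G : SimpleGraph α} (c : α → ℝ) {t : ℝ} {x y : α}
    (W : G.Walk x y) (hx : c x < t) (hy : t ≤ c y) : ∃ e ∈ W.edges, t ∈ levelCrossing c e := by
  induction W with
  | nil => exact absurd (hx.trans_le hy) (lt_irrefl _)
  | @cons x z y hxz W ih =>
    by_cases hz : c z < t
    · obtain ⟨e, he, hte⟩ := ih hz hy
      exact ⟨e, by simp [he], hte⟩
    · exact ⟨s(x, z), by simp, x, Sym2.mem_mk_left x z, z, Sym2.mem_mk_right x z, hx,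
        not_lt.1 hz⟩

lemma measureReal_levelCrossing_inter_le (c : α → ℝ) (x y : α) (S : Set ℝ) :
    volume.real (levelCrossing c s(x, y) ∩ S) ≤ |c x - c y| := by
  rw [levelCrossing_mk, abs_sub_comm]
  calc volume.real (uIoc (c x) (c y) ∩ S) ≤ volume.real (uIoc (c x) (c y)) :=
        measureReal_mono inter_subset_left (by simp [Real.volume_uIoc])
    _ = |c y - c x| := by simp [measureReal_def, Real.volume_uIoc]

open Classical in
/-- Layer-cake argument: integrate the weight of the level cut `{e | t ∈ levelCrossing c e}`
over `t ∈ (0, 1]`; each edge contributes its weight times the length of its crossing interval. -/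
lemma one_le_sum_mul_of_one_le_sum_levelCrossing (s : Finset (Sym2 α)) (c : α → ℝ)
    {w ℓ : Sym2 α → ℝ} (hw : ∀ e ∈ s, 0 ≤ w e)
    (hℓ : ∀ x y, s(x, y) ∈ s → |c x - c y| ≤ ℓ s(x, y))
    (hcut : ∀ t ∈ Ioc (0 : ℝ) 1, 1 ≤ ∑ e ∈ s with t ∈ levelCrossing c e, w e) :
    1 ≤ ∑ e ∈ s, w e * ℓ e := by
  have hvol : ∀ e ∈ s, volume.real (levelCrossing c e ∩ Ioc 0 1) ≤ ℓ e := by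
    intro e he
    induction e using Sym2.ind with
    | _ x y => exact (measureReal_levelCrossing_inter_le c x y _).trans (hℓ x y he)
  have hfin : volume (Ioc (0 : ℝ) 1) ≠ ⊤ := measure_Ioc_lt_top.ne
  have hint : ∀ e ∈ s, IntegrableOn ((levelCrossing c e).indicator fun _ => w e) (Ioc 0 1) :=
    fun e _ => (integrableOn_const hfin).indicator (measurableSet_levelCrossing c e)
  calc (1 : ℝ) = ∫ _ in Ioc (0 : ℝ) 1, (1 : ℝ) := by simp
    _ ≤ ∫ t in Ioc (0 : ℝ) 1, ∑ e ∈ s, (levelCrossing c e).indicator (fun _ => w e) t :=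
        setIntegral_mono_on (integrableOn_const hfin) (integrable_finsetSum s hint) measurableSet_Ioc
          fun t ht => by simpa only [Finset.sum_filter, Set.indicator_apply] using hcut t ht
    _ = ∑ e ∈ s, w e * volume.real (levelCrossing c e ∩ Ioc 0 1) := by
        rw [integral_finsetSum s hint]
        refine Finset.sum_congr rfl fun e _ => ?_
        rw [integral_indicator_const _ (measurableSet_levelCrossing c e),
          measureReal_restrict_apply (measurableSet_levelCrossing c e), smul_eq_mul, mul_comm]
    _ ≤ ∑ e ∈ s, w e * ℓ e :=
        Finset.sum_le_sum fun e he => mul_le_mul_of_nonneg_left (hvol e he) (hw e he)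

end Coarea

section Network

variable {G : SimpleGraph V} {V₁ V₂ : Finset V}

omit [DecidableEq V] in
lemma adj_of_mk_mem_groundEdges {x y : V} (h : s(x, y) ∈ groundEdges G V₁ V₂) : G.Adj x y := by
  classical
  simp only [groundEdges, Finset.mem_filter, Finset.mem_univ, true_and] at h
  exact h.1

lemma subset_groundEdges_of_mem_pathSets {p : Finset (Sym2 V)} (hp : p ∈ pathSets G V₁ V₂) :
    p ⊆ groundEdges G V₁ V₂ :=
  Finset.coe_subset.1 hp.1

lemma nonempty_of_mem_pathSets (hdisj : Disjoint V₁ V₂) {p : Finset (Sym2 V)}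
    (hp : p ∈ pathSets G V₁ V₂) : p.Nonempty := by
  obtain ⟨-, a, ha, b, hb, W, -, rfl⟩ := hp
  cases W with
  | nil => exact absurd hb (Finset.disjoint_left.1 hdisj ha)
  | @cons _ x _ h W => exact ⟨s(a, x), List.mem_toFinset.2 (by simp)⟩

lemma nonempty_of_mem_cutSets (hP : (pathSets G V₁ V₂).Nonempty) {q : Finset (Sym2 V)}
    (hq : q ∈ cutSets G V₁ V₂) : q.Nonempty :=
  let ⟨p, hp⟩ := hP
  (hq.2 p hp).mono Finset.inter_subset_right

lemma groundEdges_mem_cutSets (hdisj : Disjoint V₁ V₂) :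
    groundEdges G V₁ V₂ ∈ cutSets G V₁ V₂ := by
  refine ⟨subset_rfl, fun p hp => ?_⟩
  rw [Finset.inter_eq_left.2 (subset_groundEdges_of_mem_pathSets hp)]
  exact nonempty_of_mem_pathSets hdisj hp

lemma indicator_mem_admissible_cutSets {p : Finset (Sym2 V)} (hp : p ∈ pathSets G V₁ V₂) :
    (fun e => if e ∈ p then 1 else 0) ∈ admissible (cutSets G V₁ V₂) := by
  intro q hq
  rw [Finset.sum_boole, Nat.one_le_cast, Nat.one_le_iff_ne_zero, Finset.card_ne_zero,
    Finset.filter_mem_eq_inter, Finset.inter_comm]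
  exact hq.2 p hp

lemma one_le_sum_map_of_mem_admissible_pathSets {ℓ : Sym2 V → ℝ}
    (hℓ : ℓ ∈ admissible (pathSets G V₁ V₂)) (hℓ0 : ∀ e ∈ groundEdges G V₁ V₂, 0 ≤ ℓ e)
    {a b : V} (ha : a ∈ V₁) (hb : b ∈ V₂) (W : G.Walk a b)
    (hW : ∀ e ∈ W.edges, e ∈ groundEdges G V₁ V₂) : 1 ≤ (W.edges.map ℓ).sum := by
  have hpath : W.bypass.edges.toFinset ∈ pathSets G V₁ V₂ :=
    ⟨fun e he => hW e (W.edges_bypass_subset_edges (List.mem_toFinset.1 he)),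
      a, ha, b, hb, _, W.bypass_isPath, rfl⟩
  calc 1 ≤ ∑ e ∈ W.bypass.edges.toFinset, ℓ e := hℓ _ hpath
    _ = (W.bypass.edges.map ℓ).sum := List.sum_toFinset ℓ W.bypass_isPath.edges_nodup
    _ ≤ (W.edges.map ℓ).sum :=
        (W.edges_bypass_sublist_edges.map ℓ).sum_le_sum fun r hr => by
          obtain ⟨e, he, rfl⟩ := List.mem_map.1 hr
          exact hℓ0 e (hW e he)

open Classical in
lemma filter_levelCrossing_mem_cutSets {c : V → ℝ} {t : ℝ} (h₁ : ∀ a ∈ V₁, c a < t)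
    (h₂ : ∀ b ∈ V₂, t ≤ c b) :
    {e ∈ groundEdges G V₁ V₂ | t ∈ levelCrossing c e} ∈ cutSets G V₁ V₂ := by
  refine ⟨Finset.coe_subset.2 (Finset.filter_subset _ _), ?_⟩
  rintro p ⟨hpE, a, ha, b, hb, W, -, rfl⟩
  obtain ⟨e, he, hte⟩ := exists_mem_edges_of_lt_of_le c W (h₁ a ha) (h₂ b hb)
  have heE : e ∈ groundEdges G V₁ V₂ := hpE (List.mem_toFinset.2 he)
  exact ⟨e, Finset.mem_inter.2 ⟨List.mem_toFinset.2 he, Finset.mem_filter.2 ⟨heE, hte⟩⟩⟩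

/-- The level cuts of the capped `ℓ`-distance from `V₁`, one for each level in `(0, 1]`, average
`w` against `ℓ`. -/
lemma one_le_sum_mul_of_mem_admissible {w ℓ : Sym2 V → ℝ} (hw : w ∈ admissible (cutSets G V₁ V₂))
    (hw0 : ∀ e ∈ groundEdges G V₁ V₂, 0 ≤ w e) (hℓ : ℓ ∈ admissible (pathSets G V₁ V₂))
    (hℓ0 : ∀ e ∈ groundEdges G V₁ V₂, 0 ≤ ℓ e) :
    1 ≤ ∑ e ∈ groundEdges G V₁ V₂, w e * ℓ e := by
  set c := cappedDist G V₁ (groundEdges G V₁ V₂) ℓ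
  refine one_le_sum_mul_of_one_le_sum_levelCrossing _ c hw0
    (fun x y he => abs_sub_cappedDist_le hℓ0 (adj_of_mk_mem_groundEdges he) he) fun t ht => ?_
  refine hw _ (filter_levelCrossing_mem_cutSets (fun a ha => ?_) fun b hb => ?_)
  · exact (cappedDist_nonpos hℓ0 ha).trans_lt ht.1
  · exact ht.2.trans (one_le_cappedDist fun a ha W hW =>
      one_le_sum_map_of_mem_admissible_pathSets hℓ hℓ0 ha hb W hW)

variable {μ : Sym2 V → ℝ}

lemma one_le_energy_mul_energy (hμ : ∀ e ∈ groundEdges G V₁ V₂, 0 ≤ μ e) {w v : Sym2 V → ℝ}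
    (hw : w ∈ admissible (cutSets G V₁ V₂))
    (hv : (fun e => μ e * v e) ∈ admissible (pathSets G V₁ V₂)) :
    1 ≤ energy (groundEdges G V₁ V₂) μ w * energy (groundEdges G V₁ V₂) μ v := by
  have hv' : (fun e => μ e * |v e|) ∈ admissible (pathSets G V₁ V₂) := fun p hp =>
    (hv p hp).trans <| Finset.sum_le_sum fun e he =>
      mul_le_mul_of_nonneg_left (le_abs_self _) (hμ e (subset_groundEdges_of_mem_pathSets hp he))
  have hpair : 1 ≤ ∑ e ∈ groundEdges G V₁ V₂, μ e * |w e| * |v e| := by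
    have := one_le_sum_mul_of_mem_admissible (abs_mem_admissible hw) (fun e _ => abs_nonneg _) hv'
      fun e he => mul_nonneg (hμ e he) (abs_nonneg _)
    simpa only [mul_left_comm, mul_assoc] using this
  have hCS := sq_sum_mul_mul_le_energy_mul_energy hμ (fun e => |w e|) (fun e => |v e|)
  rw [energy_abs, energy_abs] at hCS
  exact (one_le_pow₀ hpair).trans hCS

lemma energy_le_sum_of_isMinOn {w : Sym2 V → ℝ} (hw : w ∈ admissible (cutSets G V₁ V₂))
    (hmin : IsMinOn (energy (groundEdges G V₁ V₂) μ) (admissible (cutSets G V₁ V₂)) w)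
    {p : Finset (Sym2 V)} (hp : p ∈ pathSets G V₁ V₂) :
    energy (groundEdges G V₁ V₂) μ w ≤ ∑ e ∈ p, μ e * w e := by
  have h := sum_mul_mul_sub_nonneg_of_isMinOn convex_admissible hw hmin
    (indicator_mem_admissible_cutSets hp)
  have hp' : groundEdges G V₁ V₂ ∩ p = p :=
    Finset.inter_eq_right.2 (subset_groundEdges_of_mem_pathSets hp)
  simp only [mul_sub, mul_ite, mul_one, mul_zero, Finset.sum_sub_distrib, Finset.sum_ite_mem,
    hp'] at h
  simpa [energy, sq, mul_assoc] using h

lemma energy_pos (hdisj : Disjoint V₁ V₂) (hμ : ∀ e ∈ groundEdges G V₁ V₂, 0 < μ e)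
    {w : Sym2 V → ℝ} (hw : w ∈ admissible (cutSets G V₁ V₂)) :
    0 < energy (groundEdges G V₁ V₂) μ w := by
  obtain ⟨e, he, hwe⟩ := Finset.exists_ne_zero_of_sum_ne_zero
    (zero_lt_one.trans_le (hw _ (groundEdges_mem_cutSets hdisj))).ne'
  exact Finset.sum_pos' (fun e he => mul_nonneg (hμ e he).le (sq_nonneg _))
    ⟨e, he, mul_pos (hμ e he) (sq_pos_of_ne_zero hwe)⟩

end Network

theorem duffin_reciprocity_general (G : SimpleGraph V) (V₁ V₂ : Finset V)
    (hdisj : Disjoint V₁ V₂)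
    (hP : (pathSets G V₁ V₂).Nonempty)
    (μ : Sym2 V → ℝ) (hμ : ∀ e ∈ groundEdges G V₁ V₂, 0 < μ e) :
    discreteEL G V₁ V₂ μ * discreteEW G V₁ V₂ μ = 1 := by
  have hμ0 : ∀ e ∈ groundEdges G V₁ V₂, 0 ≤ μ e := fun e he => (hμ e he).le
  obtain ⟨w, hw, hmin⟩ :=
    exists_isMinOn_energy_admissible hμ0 fun q hq => nonempty_of_mem_cutSets hP hq
  set L := energy (groundEdges G V₁ V₂) μ w
  have hL : 0 < L := energy_pos hdisj hμ hw
  have hEL : discreteEL G V₁ V₂ μ = L :=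
    IsLeast.csInf_eq ⟨⟨w, hw, rfl⟩, by rintro _ ⟨u, hu, rfl⟩; exact hmin hu⟩
  have hEW : discreteEW G V₁ V₂ μ = L⁻¹ := by
    refine IsLeast.csInf_eq ⟨⟨L⁻¹ • w, fun p hp => ?_, ?_⟩, ?_⟩
    · calc (1 : ℝ) = L⁻¹ * L := (inv_mul_cancel₀ hL.ne').symm
        _ ≤ L⁻¹ * ∑ e ∈ p, μ e * w e :=
          mul_le_mul_of_nonneg_left (energy_le_sum_of_isMinOn hw hmin hp) (inv_nonneg.2 hL.le)
        _ = ∑ e ∈ p, μ e * (L⁻¹ • w) e := by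
          rw [Finset.mul_sum]
          exact Finset.sum_congr rfl fun e _ => by simp only [Pi.smul_apply, smul_eq_mul]; ring
    · change L⁻¹ = energy _ μ (L⁻¹ • w)
      rw [energy_smul, pow_two, mul_assoc, inv_mul_cancel₀ hL.ne', mul_one]
    · rintro _ ⟨v, hv, rfl⟩
      exact (inv_le_iff_one_le_mul₀' hL).2 (one_le_energy_mul_energy hμ0 hw hv)
  rw [hEL, hEW, mul_inv_cancel₀ hL.ne']

/-- Duffin's reciprocity theorem: `EL(V₁,V₂,μ) · EW(V₁,V₂,μ) = 1`. -/
theorem duffin_reciprocity (G : SimpleGraph V) (V₁ V₂ : Finset V)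
    (hdisj : Disjoint V₁ V₂) (h₁ : V₁.Nonempty) (h₂ : V₂.Nonempty)
    (hP : (pathSets G V₁ V₂).Nonempty)
    (μ : Sym2 V → ℝ) (hμ : ∀ e ∈ groundEdges G V₁ V₂, 0 < μ e) :
    discreteEL G V₁ V₂ μ * discreteEW G V₁ V₂ μ = 1 :=
  duffin_reciprocity_general G V₁ V₂ hdisj hP μ hμ
end

section
/- Let T be a geodesic triangulation of the plane by φ, with all triangle images contained in the disk D_R of radius R, each triangle having all angles ≥ ε, and with triangle interiors pairwise disjoint. Then Σ_e l_e² ≤ (3/sin²ε)·πR², where the sum is over edges e both of whose adjacent triangles lie in D_R, and l_e is the Euclidean length of e. -/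
open EuclideanGeometry MeasureTheory Finset
open scoped EuclideanGeometry

/-!
If all angles of a triangle `abc` are at least `ε`, the law of sines gives
`|ac| ≥ |ab| sin ∠b ≥ |ab| sin ε`, so twice its area, `|ab| |ac| sin ∠a`, is at least
`|ab|² sin² ε`; the area is bounded below by half the parallelogram spanned by `b - a` and
`c - a`, which the triangle and its point reflection cover. Hence `l_e² sin² ε` is at most the
sum of the areas of the two triangles adjacent to `e`. Each triangle is charged by at most three
edges, and the triangles have disjoint interiors inside `D_R`, of area `π R²`.
-/

open Module
open scoped Pointwise EuclideanSpace

attribute [local instance] FiniteDimensional.of_fact_finrank_eq_two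

theorem Real.sin_le_sin_of_le_of_le_pi_sub_s15 {x y : ℝ} (hx : 0 ≤ x) (hxy : x ≤ y)
    (hyx : y ≤ Real.pi - x) : Real.sin x ≤ Real.sin y := by
  rcases le_total y (Real.pi / 2) with hy | hy
  · exact sin_le_sin_of_le_of_le_pi_div_two (by linarith) hy hxy
  · rw [← sin_pi_sub y]
    exact sin_le_sin_of_le_of_le_pi_div_two (by linarith) (by linarith) (by linarith)

theorem Finset.sum_add_le_mul_sum {ι κ : Type*} [DecidableEq ι] {F : Finset ι}
    {E : Finset κ} {t₁ t₂ : κ → ι}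
    (hmaps : ∀ e ∈ E, t₁ e ∈ F ∧ t₂ e ∈ F ∧ t₁ e ≠ t₂ e) {n : ℕ}
    (hcount : ∀ t ∈ F, #{e ∈ E | t₁ e = t ∨ t₂ e = t} ≤ n) {a : ι → ℝ}
    (ha : ∀ t ∈ F, 0 ≤ a t) :
    ∑ e ∈ E, (a (t₁ e) + a (t₂ e)) ≤ n * ∑ t ∈ F, a t := by
  have hpair :
      ∀ e ∈ E, a (t₁ e) + a (t₂ e) = ∑ t ∈ F with t₁ e = t ∨ t₂ e = t, a t := by
    intro e he
    obtain ⟨h₁, h₂, hne⟩ := hmaps e he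
    rw [show {t ∈ F | t₁ e = t ∨ t₂ e = t} = {t₁ e, t₂ e} by ext; aesop, sum_pair hne]
  calc ∑ e ∈ E, (a (t₁ e) + a (t₂ e))
      = ∑ t ∈ F, ∑ e ∈ E with t₁ e = t ∨ t₂ e = t, a t := by
        rw [sum_congr rfl hpair]
        exact sum_comm' (by aesop)
    _ = ∑ t ∈ F, #{e ∈ E | t₁ e = t ∨ t₂ e = t} * a t := by simp [sum_const]
    _ ≤ ∑ t ∈ F, n * a t := by
        gcongr with t ht
        · exact ha t ht
        · exact hcount t ht
    _ = n * ∑ t ∈ F, a t := (mul_sum ..).symm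

theorem MeasureTheory.sum_measureReal_le_measureReal_of_pairwiseDisjoint {α ι : Type*}
    [MeasurableSpace α] {μ : Measure α} {s : Finset ι} {f : ι → Set α} {B : Set α}
    (hd : (s : Set ι).PairwiseDisjoint f) (hm : ∀ i ∈ s, MeasurableSet (f i))
    (hB : ∀ i ∈ s, f i ⊆ B) (hμB : μ B ≠ ⊤) :
    ∑ i ∈ s, μ.real (f i) ≤ μ.real B := by
  rw [← measureReal_biUnion_finset hd hm fun i hi => measure_ne_top_of_subset (hB i hi) hμB]
  exact measureReal_mono (Set.iUnion₂_subset hB) hμB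

theorem EuclideanSpace.volumeReal_ball_fin_two_le (x : EuclideanSpace ℝ (Fin 2)) (r : ℝ) :
    volume.real (Metric.ball x r) ≤ Real.pi * r ^ 2 := by
  rw [measureReal_def, EuclideanSpace.volume_ball_fin_two, ENNReal.toReal_mul,
    ENNReal.toReal_pow, ENNReal.toReal_ofReal Real.pi_pos.le, ENNReal.toReal_ofReal', max_def]
  split_ifs <;> nlinarith [Real.pi_pos]

theorem EuclideanGeometry.sin_pos_of_le_angles {V P : Type*} [NormedAddCommGroup V]
    [InnerProductSpace ℝ V] [MetricSpace P] [NormedAddTorsor V P] {ε : ℝ} (hε : 0 < ε)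
    {a b c : P} (ha : ε ≤ ∠ b a c) (hb : ε ≤ ∠ a b c) : 0 < Real.sin ε := by
  refine Real.sin_pos_of_pos_of_lt_pi hε ?_
  rcases eq_or_ne a b with rfl | hab
  · rw [angle_self_left] at hb
    linarith [Real.pi_pos]
  · have hsum := angle_add_angle_add_angle_eq_pi c hab.symm
    linarith [angle_nonneg b c a, angle_comm c a b]

theorem smul_add_smul_mem_convexHull_zero {E : Type*} [AddCommGroup E] [Module ℝ E] (x y : E)
    {s t : ℝ} (hs : 0 ≤ s) (ht : 0 ≤ t) (hst : s + t ≤ 1) :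
    s • x + t • y ∈ convexHull ℝ {0, x, y} := by
  have := (convex_convexHull ℝ ({0, x, y} : Set E)).sum_mem (t := Finset.univ)
    (w := ![1 - s - t, s, t]) (z := ![0, x, y])
    (fun i _ => by fin_cases i <;> simp <;> linarith)
    (by rw [Fin.sum_univ_three]; simp only [Matrix.cons_val]; ring)
    (fun i _ => by fin_cases i <;> exact subset_convexHull ℝ _ (by simp))
  simpa [Fin.sum_univ_three] using this

theorem parallelepiped_pair_subset {E : Type*} [AddCommGroup E] [Module ℝ E] (x y : E) :
    parallelepiped ![x, y] ⊆
      convexHull ℝ {0, x, y} ∪ ((x + y) +ᵥ -convexHull ℝ {0, x, y}) := by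
  intro p hp
  obtain ⟨t, ⟨ht0, ht1⟩, rfl⟩ := (mem_parallelepiped_iff _ _).1 hp
  have h0 : 0 ≤ t 0 := ht0 0
  have h1 : 0 ≤ t 1 := ht0 1
  have h0' : t 0 ≤ 1 := ht1 0
  have h1' : t 1 ≤ 1 := ht1 1
  rw [Fin.sum_univ_two, Matrix.cons_val_zero, Matrix.cons_val_one]
  rcases le_total (t 0 + t 1) 1 with h | h
  · exact .inl (smul_add_smul_mem_convexHull_zero x y h0 h1 h)
  · refine .inr ⟨-((1 - t 0) • x + (1 - t 1) • y), ?_, ?_⟩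
    · rw [Set.mem_neg, neg_neg]
      exact smul_add_smul_mem_convexHull_zero x y (by linarith) (by linarith) (by linarith)
    · simp only [vadd_eq_add, sub_smul, one_smul]
      abel

theorem MeasureTheory.Measure.addHaar_parallelepiped_pair_le {E : Type*} [NormedAddCommGroup E]
    [NormedSpace ℝ E] [MeasurableSpace E] [BorelSpace E] [FiniteDimensional ℝ E]
    (μ : Measure E) [μ.IsAddHaarMeasure] (x y : E) :
    μ (parallelepiped ![x, y]) ≤ 2 * μ (convexHull ℝ {0, x, y}) :=
  calc μ (parallelepiped ![x, y])
      ≤ μ (convexHull ℝ {0, x, y} ∪ ((x + y) +ᵥ -convexHull ℝ {0, x, y})) :=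
        measure_mono (parallelepiped_pair_subset x y)
    _ ≤ μ (convexHull ℝ {0, x, y}) + μ ((x + y) +ᵥ -convexHull ℝ {0, x, y}) :=
        measure_union_le _ _
    _ = 2 * μ (convexHull ℝ {0, x, y}) := by
        rw [measure_vadd, Measure.measure_neg, two_mul]

section Plane

variable {V : Type*} [NormedAddCommGroup V] [InnerProductSpace ℝ V] [Fact (finrank ℝ V = 2)]

theorem Orientation.abs_areaForm_eq_sin_angle_mul_norm_mul_norm (o : Orientation ℝ V (Fin 2))
    (x y : V) :
    |o.areaForm x y| = Real.sin (InnerProductGeometry.angle x y) * (‖x‖ * ‖y‖) := by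
  rw [InnerProductGeometry.sin_angle_mul_norm_mul_norm, ← Real.sqrt_sq_eq_abs]
  congr 1
  have := o.inner_sq_add_areaForm_sq x y
  rw [real_inner_self_eq_norm_sq, real_inner_self_eq_norm_sq]
  linarith

variable [MeasurableSpace V] [BorelSpace V]

theorem Orientation.volume_parallelepiped_pair (o : Orientation ℝ V (Fin 2)) (x y : V) :
    volume (parallelepiped ![x, y]) = ENNReal.ofReal |o.areaForm x y| := by
  rw [← o.measure_eq_volume, AlternatingMap.measure_parallelepiped, o.areaForm_to_volumeForm]

theorem sin_angle_mul_dist_mul_dist_le_two_mul_volumeReal_convexHull (a b c : V) :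
    Real.sin (∠ b a c) * (dist a b * dist a c) ≤
      2 * volume.real (convexHull ℝ {a, b, c}) := by
  let o : Orientation ℝ V (Fin 2) := (finBasisOfFinrankEq ℝ V Fact.out).orientation
  have hhull : convexHull ℝ {a, b, c} = a +ᵥ convexHull ℝ {0, b - a, c - a} := by
    rw [← convexHull_vadd (𝕜 := ℝ)]
    simp [Set.vadd_set_insert]
  have hfin : volume (convexHull ℝ {a, b, c}) ≠ ⊤ :=
    ((Set.toFinite _).isCompact_convexHull ℝ).measure_lt_top.ne
  rw [measureReal_def, ← ENNReal.toReal_ofNat, ← ENNReal.toReal_mul,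
    ← ENNReal.ofReal_le_iff_le_toReal (ENNReal.mul_ne_top (by simp) hfin), hhull, measure_vadd,
    dist_comm a b, dist_comm a c, dist_eq_norm, dist_eq_norm, EuclideanGeometry.angle,
    vsub_eq_sub, vsub_eq_sub, ← o.abs_areaForm_eq_sin_angle_mul_norm_mul_norm,
    ← o.volume_parallelepiped_pair]
  exact (volume : Measure V).addHaar_parallelepiped_pair_le _ _

theorem dist_sq_mul_sin_sq_le_two_mul_volumeReal_convexHull {ε : ℝ} (hε : 0 ≤ ε) {a b c : V}
    (ha : ε ≤ ∠ b a c) (hb : ε ≤ ∠ a b c) :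
    dist a b ^ 2 * Real.sin ε ^ 2 ≤ 2 * volume.real (convexHull ℝ {a, b, c}) := by
  rcases eq_or_ne a b with rfl | hab
  · simp
  have hsum := angle_add_angle_add_angle_eq_pi c hab.symm
  rw [angle_comm b c a, angle_comm c a b] at hsum
  have hsin_nonneg : 0 ≤ Real.sin ε :=
    Real.sin_nonneg_of_nonneg_of_le_pi hε (by linarith [angle_nonneg a c b])
  have hsin_a : Real.sin ε ≤ Real.sin (∠ b a c) :=
    Real.sin_le_sin_of_le_of_le_pi_sub_s15 hε ha (by linarith [angle_nonneg a c b])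
  have hsin_b : Real.sin ε ≤ Real.sin (∠ a b c) :=
    Real.sin_le_sin_of_le_of_le_pi_sub_s15 hε hb (by linarith [angle_nonneg a c b])
  have hac : dist a b * Real.sin ε ≤ dist a c :=
    calc dist a b * Real.sin ε ≤ dist a b * Real.sin (∠ a b c) := by gcongr
      _ = Real.sin (∠ b c a) * dist c a := by rw [law_sin b c a, mul_comm]
      _ ≤ dist a c := by
        rw [dist_comm c a]
        exact mul_le_of_le_one_left dist_nonneg (Real.sin_le_one _)
  calc dist a b ^ 2 * Real.sin ε ^ 2 = Real.sin ε * (dist a b * (dist a b * Real.sin ε)) := by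
        ring
    _ ≤ Real.sin (∠ b a c) * (dist a b * dist a c) := by
        gcongr
        exact hsin_nonneg.trans hsin_a
    _ ≤ 2 * volume.real (convexHull ℝ {a, b, c}) :=
        sin_angle_mul_dist_mul_dist_le_two_mul_volumeReal_convexHull a b c

theorem dist_sq_mul_sin_sq_le_two_mul_volumeReal_interior_convexHull {ε : ℝ} (hε : 0 ≤ ε)
    {a b c p q : V} (hpq : ({p, q} : Set V) ⊆ {a, b, c})
    (ha : ε ≤ ∠ b a c) (hb : ε ≤ ∠ a b c) (hc : ε ≤ ∠ a c b) :
    dist p q ^ 2 * Real.sin ε ^ 2 ≤ 2 * volume.real (interior (convexHull ℝ {a, b, c})) := by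
  rw [measureReal_def, measure_interior_of_null_frontier
    ((convex_convexHull ℝ _).addHaar_frontier volume), ← measureReal_def]
  have side {x y z : V} (hxyz : ({x, y, z} : Set V) = {a, b, c}) (hx : ε ≤ ∠ y x z)
      (hy : ε ≤ ∠ x y z) :
      dist x y ^ 2 * Real.sin ε ^ 2 ≤ 2 * volume.real (convexHull ℝ {a, b, c}) :=
    hxyz ▸ dist_sq_mul_sin_sq_le_two_mul_volumeReal_convexHull hε hx hy
  have hacb : ({a, c, b} : Set V) = {a, b, c} := by rw [Set.pair_comm]
  have hbca : ({b, c, a} : Set V) = {a, b, c} := by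
    ext; simp only [Set.mem_insert_iff, Set.mem_singleton_iff]; tauto
  rw [Set.pair_subset_iff] at hpq
  obtain ⟨hp | hp | hp, hq | hq | hq⟩ := hpq <;> subst hp hq
  · simp
  · exact side rfl ha hb
  · exact side hacb (by rwa [angle_comm]) hc
  · rw [dist_comm]; exact side rfl ha hb
  · simp
  · exact side hbca (by rwa [angle_comm]) (by rwa [angle_comm])
  · rw [dist_comm]; exact side hacb (by rwa [angle_comm]) hc
  · rw [dist_comm]; exact side hbca (by rwa [angle_comm]) (by rwa [angle_comm])
  · simp

end Plane

theorem sum_sq_edge_lengths_le_general {ι κ : Type*} [DecidableEq ι]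
    (F : Finset ι) (A B C : ι → EuclideanSpace ℝ (Fin 2))
    (R ε : ℝ) (hε : 0 < ε)
    (E' : Finset κ) (p q : κ → EuclideanSpace ℝ (Fin 2)) (t₁ t₂ : κ → ι)
    (hadj : ∀ e ∈ E', t₁ e ∈ F ∧ t₂ e ∈ F ∧ t₁ e ≠ t₂ e)
    (hside : ∀ e ∈ E', ∀ t ∈ ({t₁ e, t₂ e} : Set ι),
      ({p e, q e} : Set (EuclideanSpace ℝ (Fin 2))) ⊆ {A t, B t, C t})
    (hcount : ∀ t ∈ F,
      (E'.filter (fun e => t₁ e = t ∨ t₂ e = t)).card ≤ 3)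
    (hball : ∀ t ∈ F,
      ({A t, B t, C t} : Set (EuclideanSpace ℝ (Fin 2))) ⊆ Metric.ball 0 R)
    (hang : ∀ t ∈ F, ε ≤ ∠ (B t) (A t) (C t) ∧ ε ≤ ∠ (A t) (B t) (C t) ∧
      ε ≤ ∠ (A t) (C t) (B t))
    (hdisjoint : (F : Set ι).Pairwise (fun s t =>
      Disjoint (interior (convexHull ℝ ({A s, B s, C s} : Set (EuclideanSpace ℝ (Fin 2)))))
        (interior (convexHull ℝ ({A t, B t, C t} : Set (EuclideanSpace ℝ (Fin 2))))))) :
    ∑ e ∈ E', dist (p e) (q e) ^ 2 ≤ 3 / Real.sin ε ^ 2 * (Real.pi * R ^ 2) := by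
  rcases E'.eq_empty_or_nonempty with rfl | ⟨e₀, he₀⟩
  · simp only [sum_empty]
    positivity
  have hsin : 0 < Real.sin ε :=
    let ⟨ha, hb, _⟩ := hang _ (hadj e₀ he₀).1
    sin_pos_of_le_angles hε ha hb
  set a : ι → ℝ := fun t => volume.real (interior (convexHull ℝ {A t, B t, C t}))
  have hedge :
      ∀ e ∈ E', dist (p e) (q e) ^ 2 * Real.sin ε ^ 2 ≤ a (t₁ e) + a (t₂ e) := by
    intro e he
    have h {t} (ht : t ∈ ({t₁ e, t₂ e} : Set ι)) (htF : t ∈ F) :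
        dist (p e) (q e) ^ 2 * Real.sin ε ^ 2 ≤ 2 * a t :=
      let ⟨ha, hb, hc⟩ := hang t htF
      dist_sq_mul_sin_sq_le_two_mul_volumeReal_interior_convexHull hε.le (hside e he t ht) ha hb hc
    linarith [h (by simp) (hadj e he).1, h (by simp) (hadj e he).2.1]
  have harea : ∑ t ∈ F, a t ≤ Real.pi * R ^ 2 :=
    (sum_measureReal_le_measureReal_of_pairwiseDisjoint hdisjoint
      (fun _ _ => isOpen_interior.measurableSet)
      (fun t ht => interior_subset.trans (convexHull_min (hball t ht) (convex_ball _ _)))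
      measure_ball_lt_top.ne).trans (EuclideanSpace.volumeReal_ball_fin_two_le _ _)
  rw [div_mul_eq_mul_div, le_div_iff₀ (by positivity), sum_mul]
  calc ∑ e ∈ E', dist (p e) (q e) ^ 2 * Real.sin ε ^ 2
      ≤ ∑ e ∈ E', (a (t₁ e) + a (t₂ e)) := sum_le_sum hedge
    _ ≤ 3 * ∑ t ∈ F, a t := by
        exact_mod_cast sum_add_le_mul_sum (a := a) hadj hcount fun _ _ => measureReal_nonneg
    _ ≤ 3 * (Real.pi * R ^ 2) := by gcongr

/-- Sum of squared edge lengths in a uniformly nondegenerate geodesic triangulation inside a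
disk of radius `R`: if every triangle has all angles `≥ ε`, all triangles lie in `D_R`, triangle
interiors are pairwise disjoint, every edge in `E'` is a side of each of its two distinct
adjacent triangles, and every triangle is adjacent to at most `3` edges of `E'`, then
`Σ_e l_e² ≤ (3 / sin² ε) · π R²`. -/
theorem sum_sq_edge_lengths_le {ι κ : Type*} [DecidableEq ι] [DecidableEq κ]
    (F : Finset ι) (A B C : ι → EuclideanSpace ℝ (Fin 2))
    (R ε : ℝ) (hε : 0 < ε) (hR : 0 < R)
    (E' : Finset κ) (p q : κ → EuclideanSpace ℝ (Fin 2)) (t₁ t₂ : κ → ι)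
    (hadj : ∀ e ∈ E', t₁ e ∈ F ∧ t₂ e ∈ F ∧ t₁ e ≠ t₂ e)
    (hpq : ∀ e ∈ E', p e ≠ q e)
    (hside : ∀ e ∈ E', ∀ t ∈ ({t₁ e, t₂ e} : Set ι),
      ({p e, q e} : Set (EuclideanSpace ℝ (Fin 2))) ⊆ {A t, B t, C t})
    (hcount : ∀ t ∈ F,
      (E'.filter (fun e => t₁ e = t ∨ t₂ e = t)).card ≤ 3)
    (hball : ∀ t ∈ F,
      ({A t, B t, C t} : Set (EuclideanSpace ℝ (Fin 2))) ⊆ Metric.ball 0 R)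
    (hang : ∀ t ∈ F, ε ≤ ∠ (B t) (A t) (C t) ∧ ε ≤ ∠ (A t) (B t) (C t) ∧
      ε ≤ ∠ (A t) (C t) (B t))
    (hdisjoint : (F : Set ι).Pairwise (fun s t =>
      Disjoint (interior (convexHull ℝ ({A s, B s, C s} : Set (EuclideanSpace ℝ (Fin 2)))))
        (interior (convexHull ℝ ({A t, B t, C t} : Set (EuclideanSpace ℝ (Fin 2))))))) :
    ∑ e ∈ E', dist (p e) (q e) ^ 2 ≤ 3 / Real.sin ε ^ 2 * (Real.pi * R ^ 2) :=
  sum_sq_edge_lengths_le_general F A B C R ε hε E' p q t₁ t₂ hadj hside hcount hball hang hdisjoint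
end
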